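/- For all integers k ≥ 0, the sequence a_k = ∑_{r=0}^{k} S(k,r) I_r satisfies the recurrence a_{k+1} = ∑_{j=0}^{k} C(k,j) · 2^{k-j} · a_j. -/

import Mathlib

open Finset

def stirling : ℕ → ℕ → ℕ
  | 0, 0 => 1
  | 0, _ + 1 => 0
  | _ + 1, 0 => 0
  | n + 1, j + 1 => (j + 1) * stirling n (j + 1) + stirling n j

/-- Number of involutions in the symmetric group on `j` letters. -/
noncomputable def involutions (j : ℕ) : ℕ := Nat.card {σ : Equiv.Perm (Fin j) // σ * σ = 1}

noncomputable def a (k : ℕ) : ℕ := ∑ r ∈ Finset.range (k + 1), stirling k r * involutions r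

open Equiv

noncomputable def invc (α : Type) [Fintype α] [DecidableEq α] : ℕ :=
  Nat.card {σ : Equiv.Perm α // σ * σ = 1}

lemma Inv_congr (α β : Type) [Fintype α] [DecidableEq α] [Fintype β] [DecidableEq β]
    (e : α ≃ β) : invc α = invc β := by
  apply Nat.card_congr
  refine Equiv.subtypeEquiv e.permCongr (fun σ => ?_)
  constructor
  · intro h
    ext b
    have := congrArg (fun τ => e (τ (e.symm b))) h
    simpa [Perm.mul_apply] using this
  · intro h
    ext x
    have := congrArg (fun τ => e.symm (τ (e x))) h
    simpa [Perm.mul_apply] using this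

lemma Inv_fin_zero : invc (Fin 0) = 1 := by
  have : Subsingleton (Perm (Fin 0)) := by infer_instance
  rw [invc, Nat.card_eq_one_iff_unique]
  constructor
  · constructor; intro a b; apply Subtype.ext; apply Equiv.ext; intro x; exact x.elim0
  · exact ⟨⟨1, by apply Equiv.ext; intro x; exact x.elim0⟩⟩

lemma Inv_fin_one : invc (Fin 1) = 1 := by
  rw [invc, Nat.card_eq_one_iff_unique]
  constructor
  · constructor; intro a b; apply Subtype.ext; apply Equiv.ext; intro x
    exact Subsingleton.elim (α := Fin 1) _ _
  · exact ⟨⟨1, by apply Equiv.ext; intro x; rfl⟩⟩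


lemma card_fix (α : Type) [Fintype α] [DecidableEq α] (a : α) :
    Nat.card {σ : Equiv.Perm α // σ * σ = 1 ∧ σ a = a} = invc {x : α // x ≠ a} := by
  apply Nat.card_congr
  have key : ∀ (σ : Perm α), σ a = a → ∀ x : α, x ≠ a ↔ σ x ≠ a := by
    intro σ ha x
    constructor
    · intro hx h; exact hx (σ.injective (h.trans ha.symm))
    · intro hx h; exact hx (h ▸ ha)
  refine
  { toFun := fun σ => ⟨(σ : Perm α).subtypePerm (fun x => (key σ.1 σ.2.2 x).symm), ?_⟩
    invFun := fun τ => ⟨Perm.ofSubtype τ.1, ?_, ?_⟩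
    left_inv := ?_
    right_inv := ?_ }
  · apply Equiv.ext; intro x; apply Subtype.ext
    show (σ : Perm α) ((σ : Perm α) x.1) = x.1
    have := congrArg (fun τ : Perm α => τ x.1) σ.2.1
    simpa [Perm.mul_apply] using this
  · rw [← map_mul, τ.2, map_one]
  · exact Perm.ofSubtype_apply_of_not_mem τ.1 (by simp)
  · intro σ
    apply Subtype.ext
    exact Perm.ofSubtype_subtypePerm (fun x => (key σ.1 σ.2.2 x).symm)
      (fun x hσ heq => hσ (by rw [heq, σ.2.2]))
  · intro τ
    apply Subtype.ext
    exact Perm.subtypePerm_ofSubtype τ.1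

lemma card_swapfib (α : Type) [Fintype α] [DecidableEq α] (a b : α) (hab : b ≠ a) :
    Nat.card {σ : Equiv.Perm α // σ * σ = 1 ∧ σ a = b} = invc {x : α // x ≠ a ∧ x ≠ b} := by
  apply Nat.card_congr
  have sqa : ∀ (σ : Perm α), σ * σ = 1 → ∀ x, σ (σ x) = x := by
    intro σ h x
    have := congrArg (fun τ : Perm α => τ x) h
    simpa [Perm.mul_apply] using this
  have hb : ∀ (σ : Perm α), σ * σ = 1 → σ a = b → σ b = a := by
    intro σ h hA; rw [← hA]; exact sqa σ h a
  have key : ∀ (σ : Perm α), σ * σ = 1 → σ a = b →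
      ∀ x : α, (x ≠ a ∧ x ≠ b) ↔ (σ x ≠ a ∧ σ x ≠ b) := by
    intro σ h hA x
    have h1 : σ x = a ↔ x = b := by
      constructor
      · intro hx; exact σ.injective (hx.trans (hb σ h hA).symm)
      · intro hx; subst hx; exact hb σ h hA
    have h2 : σ x = b ↔ x = a := by
      constructor
      · intro hx; exact σ.injective (hx.trans hA.symm)
      · intro hx; subst hx; exact hA
    constructor
    · rintro ⟨hxa, hxb⟩; exact ⟨fun hc => hxb (h1.mp hc), fun hc => hxa (h2.mp hc)⟩
    · rintro ⟨hsa, hsb⟩; exact ⟨fun hc => hsb (h2.mpr hc), fun hc => hsa (h1.mpr hc)⟩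
  have pval : ∀ (τ : Perm {x : α // x ≠ a ∧ x ≠ b}) (x : α) (hx : x ≠ a ∧ x ≠ b),
      Perm.ofSubtype τ x ≠ a ∧ Perm.ofSubtype τ x ≠ b := by
    intro τ x hx
    rw [Perm.ofSubtype_apply_of_mem τ hx]
    exact (τ ⟨x, hx⟩).2
  have happa : ∀ (τ : Perm {x : α // x ≠ a ∧ x ≠ b}),
      (Equiv.swap a b * Perm.ofSubtype τ) a = b := by
    intro τ
    simp only [Perm.mul_apply]
    rw [Perm.ofSubtype_apply_of_not_mem τ (by simp), Equiv.swap_apply_left]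
  have happb : ∀ (τ : Perm {x : α // x ≠ a ∧ x ≠ b}),
      (Equiv.swap a b * Perm.ofSubtype τ) b = a := by
    intro τ
    simp only [Perm.mul_apply]
    rw [Perm.ofSubtype_apply_of_not_mem τ (by simp [hab]), Equiv.swap_apply_right]
  have happ : ∀ (τ : Perm {x : α // x ≠ a ∧ x ≠ b}) (y : α) (hy : y ≠ a ∧ y ≠ b),
      (Equiv.swap a b * Perm.ofSubtype τ) y = Perm.ofSubtype τ y := by
    intro τ y hy
    have := pval τ y hy
    simp only [Perm.mul_apply]
    exact Equiv.swap_apply_of_ne_of_ne this.1 this.2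
  refine
  { toFun := fun σ => ⟨(σ : Perm α).subtypePerm (fun x => (key σ.1 σ.2.1 σ.2.2 x).symm), ?_⟩
    invFun := fun τ => ⟨Equiv.swap a b * Perm.ofSubtype τ.1, ?_, ?_⟩
    left_inv := ?_
    right_inv := ?_ }
  · apply Equiv.ext; intro x; apply Subtype.ext
    show (σ : Perm α) ((σ : Perm α) x.1) = x.1
    exact sqa σ.1 σ.2.1 x.1
  · apply Equiv.ext; intro x
    show (Equiv.swap a b * Perm.ofSubtype τ.1) ((Equiv.swap a b * Perm.ofSubtype τ.1) x)
        = (1 : Perm α) x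
    by_cases hxa : x = a
    · rw [hxa, happa, happb]; rfl
    · by_cases hxb : x = b
      · rw [hxb, happb, happa]; rfl
      · have hx : x ≠ a ∧ x ≠ b := ⟨hxa, hxb⟩
        rw [happ τ.1 x hx, happ τ.1 _ (pval τ.1 x hx),
          Perm.ofSubtype_apply_of_mem τ.1 hx, Perm.ofSubtype_apply_coe]
        have hsq : τ.1 (τ.1 ⟨x, hx⟩) = ⟨x, hx⟩ := by
          have := congrArg (fun π : Perm {x : α // x ≠ a ∧ x ≠ b} => π ⟨x, hx⟩) τ.2
          simpa [Perm.mul_apply] using this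
        rw [hsq]; rfl
  · exact happa τ.1
  · intro σ
    apply Subtype.ext
    show Equiv.swap a b * Perm.ofSubtype ((σ.1).subtypePerm (fun x => (key σ.1 σ.2.1 σ.2.2 x).symm)) = σ.1
    set τ : Perm {x : α // x ≠ a ∧ x ≠ b} := (σ.1).subtypePerm (fun x => (key σ.1 σ.2.1 σ.2.2 x).symm) with hτ
    apply Equiv.ext; intro x
    by_cases hxa : x = a
    · rw [hxa, happa τ, σ.2.2]
    · by_cases hxb : x = b
      · rw [hxb, happb τ, hb σ.1 σ.2.1 σ.2.2]
      · have hx : x ≠ a ∧ x ≠ b := ⟨hxa, hxb⟩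
        rw [happ τ x hx, Perm.ofSubtype_apply_of_mem τ hx, hτ]
        rfl
  · intro τ
    apply Subtype.ext
    apply Equiv.ext; intro x
    apply Subtype.ext
    rw [Perm.subtypePerm_apply]
    show (Equiv.swap a b * Perm.ofSubtype τ.1) x.1 = (τ.1 x : α)
    rw [happ τ.1 x.1 x.2, Perm.ofSubtype_apply_of_mem τ.1 x.2]

lemma invc_eq_sum (α : Type) [Fintype α] [DecidableEq α] (a : α) :
    invc α = ∑ b : α, Nat.card {σ : Equiv.Perm α // σ * σ = 1 ∧ σ a = b} := by
  simp only [invc, Nat.card_eq_fintype_card, Fintype.card_subtype]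
  rw [Finset.card_eq_sum_card_fiberwise (f := fun σ : Perm α => σ a) (t := univ)
    (fun x _ => mem_univ _)]
  apply Finset.sum_congr rfl
  intro b _
  rw [Finset.filter_filter]

lemma invc_of_card (α : Type) [Fintype α] [DecidableEq α] (m : ℕ)
    (h : Fintype.card α = m) : invc α = invc (Fin m) :=
  Inv_congr _ _ (Fintype.equivFinOfCardEq h)

lemma invc_rec (n : ℕ) : invc (Fin (n + 2)) = invc (Fin (n + 1)) + (n + 1) * invc (Fin n) := by
  classical
  set a : Fin (n + 2) := 0 with ha
  rw [invc_eq_sum (Fin (n + 2)) a]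
  rw [← Finset.add_sum_erase _ _ (mem_univ a)]
  have hfix : Nat.card {σ : Perm (Fin (n+2)) // σ * σ = 1 ∧ σ a = a} = invc (Fin (n + 1)) := by
    rw [card_fix, invc_of_card _ (n + 1)]
    rw [Fintype.card_subtype_compl (p := fun x => x = a)]
    simp [Fintype.card_subtype_eq]
  have hsw : ∀ b ∈ univ.erase a,
      Nat.card {σ : Perm (Fin (n+2)) // σ * σ = 1 ∧ σ a = b} = invc (Fin n) := by
    intro b hb
    have hba : b ≠ a := (Finset.mem_erase.mp hb).1
    rw [card_swapfib _ a b hba, invc_of_card _ n]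
    rw [Fintype.card_subtype]
    have : (univ.filter fun x : Fin (n+2) => x ≠ a ∧ x ≠ b) = (univ.erase a).erase b := by
      ext x
      simp only [Finset.mem_erase, Finset.mem_filter, mem_univ, and_true, true_and]
      tauto
    rw [this, Finset.card_erase_of_mem, Finset.card_erase_of_mem (mem_univ a)]
    · simp
    · exact Finset.mem_erase.mpr ⟨hba, mem_univ b⟩
  rw [hfix, Finset.sum_congr rfl hsw, Finset.sum_const,
    Finset.card_erase_of_mem (mem_univ a), Finset.card_univ, Fintype.card_fin]
  simp [mul_comm]

lemma involutions_zero : involutions 0 = 1 := Inv_fin_zero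
lemma involutions_one : involutions 1 = 1 := Inv_fin_one
lemma involutions_rec (n : ℕ) :
    involutions (n + 2) = involutions (n + 1) + (n + 1) * involutions n := invc_rec n

lemma stirling_eq_zero : ∀ k r : ℕ, k < r → stirling k r = 0 := by
  intro k
  induction k with
  | zero => intro r hr; match r, hr with | r + 1, _ => rfl
  | succ n ih =>
    intro r hr
    match r, hr with
    | j + 1, hr =>
      show (j + 1) * stirling n (j + 1) + stirling n j = 0
      rw [ih (j+1) (by omega), ih j (by omega)]
      simp

lemma c_eq (k : ℕ) : ∀ r : ℕ, ∑ j ∈ range (k + 1), k.choose j * 2 ^ (k - j) * stirling j r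
    = stirling k r + 2 * (r + 1) * stirling k (r + 1)
      + (r + 1) * (r + 2) * stirling k (r + 2) := by
  induction k with
  | zero =>
    intro r
    cases r <;> simp [stirling]
  | succ k ih =>
    have split : ∀ r : ℕ, ∑ j ∈ range (k + 2), (k+1).choose j * 2 ^ (k + 1 - j) * stirling j r
        = ∑ j ∈ range (k + 1), k.choose j * 2 ^ (k - j) * stirling (j+1) r
          + 2 * ∑ j ∈ range (k + 1), k.choose j * 2 ^ (k - j) * stirling j r := by
      intro r
      set g : ℕ → ℕ := fun j => k.choose j * 2 ^ (k + 1 - j) * stirling j r with hg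
      have hgj : ∀ j, g (j+1) = k.choose (j+1) * 2 ^ (k - j) * stirling (j+1) r := by
        intro j
        have h1 : k + 1 - (j + 1) = k - j := by omega
        simp only [hg, h1]
      have step1 : ∑ j ∈ range (k + 2), (k+1).choose j * 2 ^ (k + 1 - j) * stirling j r
          = ∑ j ∈ range (k+1), (k.choose j + k.choose (j+1)) * 2 ^ (k - j) * stirling (j+1) r
            + g 0 := by
        rw [Finset.sum_range_succ']
        congr 1
        · refine Finset.sum_congr rfl fun j hj => ?_
          have h1 : k + 1 - (j + 1) = k - j := by omega
          rw [Nat.choose_succ_succ, h1]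
        · simp [hg]
      have step2 : ∑ j ∈ range (k+1), (k.choose j + k.choose (j+1)) * 2 ^ (k - j)
            * stirling (j+1) r
          = ∑ j ∈ range (k+1), k.choose j * 2 ^ (k - j) * stirling (j+1) r
            + ∑ j ∈ range (k+1), g (j+1) := by
        rw [← Finset.sum_add_distrib]
        refine Finset.sum_congr rfl fun j hj => ?_
        rw [hgj]
        ring
      have step3 : ∑ j ∈ range (k+1), g (j+1) + g 0 = ∑ j ∈ range (k+2), g j :=
        (Finset.sum_range_succ' g (k+1)).symm
      have step4 : ∑ j ∈ range (k+2), g j = ∑ j ∈ range (k+1), g j := by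
        rw [Finset.sum_range_succ]
        have h0 : k.choose (k+1) = 0 := Nat.choose_eq_zero_of_lt (by omega)
        simp [hg, h0]
      have step5 : ∑ j ∈ range (k+1), g j
          = 2 * ∑ j ∈ range (k+1), k.choose j * 2^(k-j) * stirling j r := by
        rw [Finset.mul_sum]
        refine Finset.sum_congr rfl fun j hj => ?_
        have hj' : j ≤ k := Nat.lt_succ_iff.mp (Finset.mem_range.mp hj)
        have h1 : k + 1 - j = (k - j) + 1 := by omega
        simp only [hg]
        rw [h1, pow_succ]
        ring
      rw [step1, step2]
      omega
    intro r
    rw [split r]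
    match r with
    | 0 =>
      have z : ∀ j ∈ range (k+1), k.choose j * 2 ^ (k - j) * stirling (j+1) 0 = 0 := by
        intro j _
        show k.choose j * 2 ^ (k - j) * 0 = 0
        rw [mul_zero]
      rw [Finset.sum_congr rfl z, Finset.sum_const_zero, zero_add, ih 0]
      show 2 * (stirling k 0 + 2 * (0+1) * stirling k (0+1) + (0+1) * (0+2) * stirling k (0+2))
        = 0 + 2 * (0+1) * (1 * stirling k 1 + stirling k 0)
          + (0+1) * (0+2) * (2 * stirling k 2 + stirling k 1)
      norm_num
      ring
    | m + 1 =>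
      have e4 : ∀ j ∈ range (k+1), k.choose j * 2 ^ (k - j) * stirling (j+1) (m+1)
          = (m+1) * (k.choose j * 2 ^ (k - j) * stirling j (m+1))
            + k.choose j * 2 ^ (k - j) * stirling j m := by
        intro j hj
        show k.choose j * 2 ^ (k - j) * ((m + 1) * stirling j (m + 1) + stirling j m) = _
        ring
      rw [Finset.sum_congr rfl e4, Finset.sum_add_distrib, ← Finset.mul_sum, ih m, ih (m+1)]
      show (m+1) * (stirling k (m+1) + 2 * (m+1+1) * stirling k (m+1+1)
            + (m+1+1) * (m+1+2) * stirling k (m+1+2))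
          + (stirling k m + 2 * (m+1) * stirling k (m+1)
            + (m+1) * (m+2) * stirling k (m+2))
          + 2 * (stirling k (m+1) + 2 * (m+1+1) * stirling k (m+1+1)
            + (m+1+1) * (m+1+2) * stirling k (m+1+2))
        = ((m+1) * stirling k (m+1) + stirling k m)
          + 2 * (m+1+1) * ((m+2) * stirling k (m+2) + stirling k (m+1))
          + (m+1+1) * (m+1+2) * ((m+3) * stirling k (m+3) + stirling k (m+2))
      have h1 : m+1+1 = m+2 := rfl
      have h2 : m+1+2 = m+3 := rfl
      rw [h1, h2]
      ring

lemma trim (N M : ℕ) (h : N ≤ M) (f : ℕ → ℕ) (hf : ∀ r, N ≤ r → f r = 0) :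
    ∑ r ∈ range M, f r = ∑ r ∈ range N, f r := by
  refine (Finset.sum_subset (Finset.range_subset_range.mpr h) ?_).symm
  intro x _ hnx
  exact hf x (by simpa using hnx)

lemma per (r : ℕ) : r * involutions r + involutions (r + 1)
    = involutions r + 2 * r * involutions (r - 1) + r * (r - 1) * involutions (r - 2) := by
  match r with
  | 0 => simp [involutions_zero, involutions_one]
  | 1 =>
    have h2 : involutions 2 = 2 := by
      have h := involutions_rec 0
      norm_num [involutions_zero, involutions_one] at h
      exact h
    norm_num [h2, involutions_zero, involutions_one]
  | u + 2 =>
    show (u+2) * involutions (u+2) + involutions (u+1+2)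
      = involutions (u+2) + 2 * (u+2) * involutions (u+1) + (u+2) * (u+1) * involutions u
    rw [involutions_rec (u+1), involutions_rec u]
    simp only [show u+1+1 = u+2 from rfl]
    ring

theorem stmt10 (k : ℕ) :
    a (k + 1) = ∑ j ∈ Finset.range (k + 1), k.choose j * 2 ^ (k - j) * a j := by
  set I := involutions with hI
  set S := stirling with hS
  -- RHS transformation
  have hR1 : ∀ j ∈ range (k + 1), k.choose j * 2 ^ (k - j) * a j
      = ∑ r ∈ range (k + 3), k.choose j * 2 ^ (k - j) * (S j r * I r) := by
    intro j hj
    have hj' : j ≤ k := Nat.lt_succ_iff.mp (Finset.mem_range.mp hj)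
    rw [a, ← Finset.mul_sum]
    congr 1
    refine (trim (j + 1) (k + 3) (by omega) _ (fun r hr => ?_)).symm
    rw [stirling_eq_zero j r (by omega), zero_mul]
  rw [Finset.sum_congr rfl hR1, Finset.sum_comm]
  have hR2 : ∀ r ∈ range (k + 3),
      ∑ j ∈ range (k + 1), k.choose j * 2 ^ (k - j) * (S j r * I r)
      = (S k r + 2 * (r + 1) * S k (r + 1) + (r + 1) * (r + 2) * S k (r + 2)) * I r := by
    intro r _
    rw [← c_eq k r, Finset.sum_mul]
    exact Finset.sum_congr rfl (fun j _ => by ring)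
  rw [Finset.sum_congr rfl hR2]
  -- split into three sums
  have hsplit : ∑ r ∈ range (k + 3),
      (S k r + 2 * (r + 1) * S k (r + 1) + (r + 1) * (r + 2) * S k (r + 2)) * I r
      = (∑ r ∈ range (k + 3), S k r * I r)
        + (∑ r ∈ range (k + 3), 2 * (r + 1) * S k (r + 1) * I r)
        + (∑ r ∈ range (k + 3), (r + 1) * (r + 2) * S k (r + 2) * I r) := by
    rw [← Finset.sum_add_distrib, ← Finset.sum_add_distrib]
    exact Finset.sum_congr rfl (fun r _ => by ring)
  rw [hsplit]
  -- T0
  have hT0 : ∑ r ∈ range (k + 3), S k r * I r = ∑ r ∈ range (k + 1), S k r * I r :=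
    trim (k + 1) (k + 3) (by omega) _
      (fun r hr => by rw [hS, stirling_eq_zero k r (by omega), zero_mul])
  -- T1
  set H : ℕ → ℕ := fun s => 2 * s * S k s * I (s - 1) with hH
  have hT1a : ∑ r ∈ range (k + 3), 2 * (r + 1) * S k (r + 1) * I r
      = ∑ r ∈ range (k + 3), H (r + 1) := rfl
  have hT1b : ∑ r ∈ range (k + 4), H r = ∑ r ∈ range (k + 3), H (r + 1) + H 0 :=
    Finset.sum_range_succ' H (k + 3)
  have hT1c : ∑ r ∈ range (k + 4), H r = ∑ r ∈ range (k + 1), H r :=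
    trim (k + 1) (k + 4) (by omega) _
      (fun r hr => by rw [hH]; show 2 * r * S k r * I (r-1) = 0;
                      rw [hS, stirling_eq_zero k r (by omega), mul_zero, zero_mul])
  have hH0 : H 0 = 0 := by rw [hH]; show 2 * 0 * S k 0 * I (0 - 1) = 0; ring
  have hT1 : ∑ r ∈ range (k + 3), 2 * (r + 1) * S k (r + 1) * I r
      = ∑ r ∈ range (k + 1), H r := by omega
  -- T2
  set G : ℕ → ℕ := fun s => s * (s - 1) * S k s * I (s - 2) with hG
  have hT2a : ∑ r ∈ range (k + 3), (r + 1) * (r + 2) * S k (r + 2) * I r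
      = ∑ r ∈ range (k + 3), G (r + 2) := by
    refine Finset.sum_congr rfl (fun r _ => ?_)
    show (r + 1) * (r + 2) * S k (r + 2) * I r = (r + 2) * (r + 1) * S k (r + 2) * I r
    ring
  have hT2b : ∑ r ∈ range (k + 5), G r = ∑ r ∈ range (k + 4), G (r + 1) + G 0 :=
    Finset.sum_range_succ' G (k + 4)
  have hT2c : ∑ r ∈ range (k + 4), G (r + 1) = ∑ r ∈ range (k + 3), G (r + 2) + G 1 :=
    Finset.sum_range_succ' (fun r => G (r + 1)) (k + 3)
  have hT2d : ∑ r ∈ range (k + 5), G r = ∑ r ∈ range (k + 1), G r :=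
    trim (k + 1) (k + 5) (by omega) _
      (fun r hr => by rw [hG]; show r * (r - 1) * S k r * I (r - 2) = 0;
                      rw [hS, stirling_eq_zero k r (by omega), mul_zero, zero_mul])
  have hG0 : G 0 = 0 := by rw [hG]; show 0 * (0 - 1) * S k 0 * I (0 - 2) = 0; ring
  have hG1 : G 1 = 0 := by
    rw [hG]; show 1 * (1 - 1) * S k 1 * I (1 - 2) = 0
    norm_num
  have hT2 : ∑ r ∈ range (k + 3), (r + 1) * (r + 2) * S k (r + 2) * I r
      = ∑ r ∈ range (k + 1), G r := by omega
  rw [hT0, hT1, hT2]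
  -- LHS transformation
  have hL0 : a (k + 1) = ∑ r ∈ range (k + 1), S (k+1) (r+1) * I (r+1) + S (k+1) 0 * I 0 := by
    rw [a]
    exact Finset.sum_range_succ' _ (k + 1)
  have hS0 : S (k + 1) 0 * I 0 = 0 := by
    rw [hS]; show (0 : ℕ) * I 0 = 0; ring
  have hL1 : ∀ r ∈ range (k + 1), S (k+1) (r+1) * I (r+1)
      = (r + 1) * S k (r+1) * I (r+1) + S k r * I (r+1) := by
    intro r _
    rw [hS]
    show ((r + 1) * stirling k (r + 1) + stirling k r) * involutions (r+1) = _
    ring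
  set F : ℕ → ℕ := fun s => s * S k s * I s with hF
  have hL2 : ∑ r ∈ range (k + 2), F r = ∑ r ∈ range (k + 1), F (r + 1) + F 0 :=
    Finset.sum_range_succ' F (k + 1)
  have hF0 : F 0 = 0 := by rw [hF]; show 0 * S k 0 * I 0 = 0; ring
  have hL3 : ∑ r ∈ range (k + 2), F r = ∑ r ∈ range (k + 1), F r := by
    rw [Finset.sum_range_succ]
    have : F (k + 1) = 0 := by
      rw [hF]; show (k+1) * S k (k+1) * I (k+1) = 0
      rw [hS, stirling_eq_zero k (k+1) (by omega), mul_zero, zero_mul]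
    rw [this, add_zero]
  have hL4 : ∑ r ∈ range (k + 1), F (r + 1)
      = ∑ r ∈ range (k + 1), (r + 1) * S k (r+1) * I (r+1) := rfl
  have hLHS : a (k + 1) = ∑ r ∈ range (k + 1), (F r + S k r * I (r + 1)) := by
    rw [hL0, Finset.sum_congr rfl hL1, Finset.sum_add_distrib, hS0, add_zero,
      ← hL4, Finset.sum_add_distrib]
    omega
  rw [hLHS]
  -- final per-term comparison
  rw [← Finset.sum_add_distrib, ← Finset.sum_add_distrib]
  refine Finset.sum_congr rfl (fun r _ => ?_)
  have hper := per r
  rw [hF, hH, hG, hI, hS]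
  show r * stirling k r * involutions r + stirling k r * involutions (r + 1)
    = stirling k r * involutions r + 2 * r * stirling k r * involutions (r - 1)
      + r * (r - 1) * stirling k r * involutions (r - 2)
  calc r * stirling k r * involutions r + stirling k r * involutions (r + 1)
      = stirling k r * (r * involutions r + involutions (r + 1)) := by ring
    _ = stirling k r * (involutions r + 2 * r * involutions (r - 1)
          + r * (r - 1) * involutions (r - 2)) := by rw [hper]
    _ = _ := by ring
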